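/- Let m ≥ 1 and let x₀, x₁ ∈ ℂ_p with |x₀| = |x₁| = ρ_m and |x₀ − x₁| ≤ S. If λ₀, λ₁ ∈ Λ are such that ρ_{m−1}·ρ_{m−2}·…·ρ_1·|x₀ − x₁| < |λ₀ − λ₁| ≤ S, then |Q_{λ₀}^m(x₀) − Q_{λ₁}^m(x₁)| = |λ₀ − λ₁|. -/

import Mathlib

open Filter Metric

/-- The polynomial family `P_λ(z) = (λ/p)·z^p + (1 − λ/p)·z^{p+1}`. -/
noncomputable def Pfam {K : Type*} [NontriviallyNormedField K] (p : ℕ) (lam z : K) : K :=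
  lam / (p : K) * z ^ p + (1 - lam / (p : K)) * z ^ (p + 1)

/-- Evaluation at `z` of the power series with coefficients `a`. -/
noncomputable def Qser {K : Type*} [NontriviallyNormedField K] (a : ℕ → K) (z : K) : K :=
  ∑' i, a i * z ^ i

/-- The perturbed map `Q*_λ = P_λ + Q`. -/
noncomputable def Qstar {K : Type*} [NontriviallyNormedField K] (p : ℕ) (a : ℕ → K)
    (lam z : K) : K :=
  Pfam p lam z + Qser a z

/-- The conjugated map `Q_λ(z) = Q*_λ(z + h(λ) − 1) − h(λ) + 1`. -/
noncomputable def Qconj {K : Type*} [NontriviallyNormedField K] (p : ℕ) (a : ℕ → K)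
    (h : K → K) (lam z : K) : K :=
  Qstar p a lam (z + h lam - 1) - h lam + 1

section Aux19

open IsUltrametricDist

variable {K : Type*} [NontriviallyNormedField K] [IsUltrametricDist K]

lemma aux19_nadd {x y : K} (h : ‖y‖ < ‖x‖) : ‖x + y‖ = ‖x‖ := by
  rw [norm_add_eq_max_of_norm_ne_norm h.ne', max_eq_left h.le]

lemma aux19_nsub {x y : K} (h : ‖y‖ < ‖x‖) : ‖x - y‖ = ‖x‖ := by
  rw [sub_eq_add_neg]
  exact aux19_nadd (by rwa [norm_neg])

lemma aux19_nsub' {x y : K} (h : ‖x‖ < ‖y‖) : ‖x - y‖ = ‖y‖ := by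
  rw [← norm_neg (x - y), neg_sub]
  exact aux19_nsub h

lemma aux19_nsub_le (x y : K) : ‖x - y‖ ≤ max ‖x‖ ‖y‖ := by
  rw [sub_eq_add_neg]
  simpa [norm_neg] using norm_add_le_max x (-y)

lemma aux19_norm_eq_one {x : K} (h : ‖x - 1‖ < 1) : ‖x‖ = 1 := by
  have h1 : ‖(1 : K) + (x - 1)‖ = ‖(1 : K)‖ := aux19_nadd (by simpa using h)
  simpa using h1

lemma aux19_norm_le_one {x : K} (h : ‖x - 1‖ ≤ 1) : ‖x‖ ≤ 1 := by
  have h1 : ‖(1 : K) + (x - 1)‖ ≤ max ‖(1 : K)‖ ‖x - 1‖ := norm_add_le_max _ _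
  simpa using h1.trans (max_le le_rfl (h.trans_eq norm_one.symm))

lemma aux19_mul_near_one {x y : K} {t : ℝ} (ht : t ≤ 1) (hx : ‖x - 1‖ ≤ t) (hy : ‖y - 1‖ ≤ t) :
    ‖x * y - 1‖ ≤ t := by
  have hy1 : ‖y‖ ≤ 1 := aux19_norm_le_one (hy.trans ht)
  have key : x * y - 1 = (x - 1) * y + (y - 1) := by ring
  rw [key]
  refine (norm_add_le_max _ _).trans (max_le ?_ hy)
  rw [norm_mul]
  calc ‖x - 1‖ * ‖y‖ ≤ t * 1 :=
        mul_le_mul hx hy1 (norm_nonneg _) ((norm_nonneg _).trans hx)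
    _ = t := mul_one t

lemma aux19_pow_near_one {x : K} {t : ℝ} (ht : t ≤ 1) (hx : ‖x - 1‖ ≤ t) (i : ℕ) :
    ‖x ^ i - 1‖ ≤ t := by
  induction i with
  | zero => simpa using (norm_nonneg _).trans hx
  | succ i ih =>
    rw [pow_succ]
    exact aux19_mul_near_one ht ih hx

lemma aux19_prodpow_near_one {x y : K} {t : ℝ} (ht : t ≤ 1) (hx : ‖x - 1‖ ≤ t)
    (hy : ‖y - 1‖ ≤ t) (i j : ℕ) : ‖x ^ i * y ^ j - 1‖ ≤ t :=
  aux19_mul_near_one ht (aux19_pow_near_one ht hx i) (aux19_pow_near_one ht hy j)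

variable [CompleteSpace K]

lemma aux19_summable {C rhat : ℝ} (hrhat : 1 < rhat) (f : ℕ → K)
    (hb : ∀ i, ‖f i‖ ≤ C / rhat ^ i) : Summable f := by
  apply NonarchimedeanAddGroup.summable_of_tendsto_cofinite_zero
  rw [Nat.cofinite_eq_atTop]
  apply squeeze_zero_norm hb
  have h0 : (0 : ℝ) ≤ rhat⁻¹ := inv_nonneg.mpr (by linarith)
  have h1 : rhat⁻¹ < 1 := inv_lt_one_of_one_lt₀ hrhat
  have := (tendsto_pow_atTop_nhds_zero_of_lt_one h0 h1).const_mul C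
  simpa [div_eq_mul_inv, inv_pow] using this

lemma aux19_term_bound {C rhat : ℝ} (hrhat : 1 < rhat) {a : ℕ → K}
    (hCa : ∀ i, ‖a i‖ * rhat ^ i ≤ C) (i : ℕ) : ‖a i‖ ≤ C / rhat ^ i := by
  rw [le_div_iff₀ (pow_pos (by linarith) i)]
  exact hCa i

lemma aux19_term_bound' {C rhat : ℝ} (hrhat : 1 < rhat) {a : ℕ → K}
    (hCa : ∀ i, ‖a i‖ * rhat ^ i ≤ C) (i : ℕ) : ‖a i‖ ≤ C := by
  refine le_trans ?_ (hCa i)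
  have h1 : (1:ℝ) ≤ rhat ^ i := by
    have := pow_le_pow_left₀ (by norm_num : (0:ℝ) ≤ 1) hrhat.le i
    simpa using this
  nlinarith [norm_nonneg (a i)]

lemma aux19_Qser_summable {C rhat : ℝ} (hrhat : 1 < rhat) {a : ℕ → K}
    (hCa : ∀ i, ‖a i‖ * rhat ^ i ≤ C) {z : K} (hz : ‖z‖ ≤ 1) :
    Summable (fun i => a i * z ^ i) := by
  apply aux19_summable hrhat
  intro i
  rw [norm_mul, norm_pow]
  calc ‖a i‖ * ‖z‖ ^ i ≤ ‖a i‖ * 1 := by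
        have := pow_le_one₀ (norm_nonneg z) hz (n := i)
        have := norm_nonneg (a i)
        nlinarith
    _ = ‖a i‖ := mul_one _
    _ ≤ C / rhat ^ i := aux19_term_bound hrhat hCa i

lemma aux19_Qser_norm_le {C rhat : ℝ} (hrhat : 1 < rhat) {a : ℕ → K} (hC0 : 0 ≤ C)
    (hCa : ∀ i, ‖a i‖ * rhat ^ i ≤ C) {z : K} (hz : ‖z‖ ≤ 1) : ‖Qser a z‖ ≤ C := by
  refine norm_tsum_le_of_forall_le_of_nonneg hC0 fun i => ?_
  rw [norm_mul, norm_pow]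
  have h1 := pow_le_one₀ (norm_nonneg z) hz (n := i)
  have h2 := aux19_term_bound' hrhat hCa i
  nlinarith [norm_nonneg (a i), pow_nonneg (norm_nonneg z) i]

lemma aux19_Qser_sub {C rhat : ℝ} (hrhat : 1 < rhat) {a : ℕ → K} (hC0 : 0 ≤ C)
    (hCa : ∀ i, ‖a i‖ * rhat ^ i ≤ C) {z w : K} (hz : ‖z‖ ≤ 1) (hw : ‖w‖ ≤ 1) :
    ∃ W : K, Qser a z - Qser a w = (z - w) * W ∧ ‖W‖ ≤ C := by
  have hgb : ∀ i : ℕ, ‖a i * ∑ j ∈ Finset.range i, z ^ j * w ^ (i - 1 - j)‖ ≤ C / rhat ^ i := by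
    intro i
    rw [norm_mul]
    have hs : ‖∑ j ∈ Finset.range i, z ^ j * w ^ (i - 1 - j)‖ ≤ 1 := by
      refine IsUltrametricDist.norm_sum_le_of_forall_le_of_nonneg zero_le_one fun j _ => ?_
      rw [norm_mul, norm_pow, norm_pow]
      have := pow_le_one₀ (norm_nonneg z) hz (n := j)
      have := pow_le_one₀ (norm_nonneg w) hw (n := i - 1 - j)
      nlinarith [pow_nonneg (norm_nonneg z) j]
    have h1 := aux19_term_bound hrhat hCa i
    have h2 : (0:ℝ) ≤ C / rhat ^ i := div_nonneg hC0 (pow_nonneg (by linarith) i)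
    nlinarith [norm_nonneg (a i)]
  have h1 : Summable (fun i => a i * z ^ i) := aux19_Qser_summable hrhat hCa hz
  have h2 : Summable (fun i => a i * w ^ i) := aux19_Qser_summable hrhat hCa hw
  have h3 : Summable (fun i => a i * ∑ j ∈ Finset.range i, z ^ j * w ^ (i - 1 - j)) :=
    aux19_summable hrhat _ hgb
  refine ⟨∑' i, a i * ∑ j ∈ Finset.range i, z ^ j * w ^ (i - 1 - j), ?_, ?_⟩
  · calc Qser a z - Qser a w = ∑' i, (a i * z ^ i - a i * w ^ i) := (Summable.tsum_sub h1 h2).symm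
      _ = ∑' i, (z - w) * (a i * ∑ j ∈ Finset.range i, z ^ j * w ^ (i - 1 - j)) := by
          congr 1
          funext i
          have hg := geom_sum₂_mul z w i
          calc a i * z ^ i - a i * w ^ i = a i * (z ^ i - w ^ i) := by ring
            _ = a i * ((∑ j ∈ Finset.range i, z ^ j * w ^ (i - 1 - j)) * (z - w)) := by rw [hg]
            _ = (z - w) * (a i * ∑ j ∈ Finset.range i, z ^ j * w ^ (i - 1 - j)) := by ring
      _ = (z - w) * ∑' i, a i * ∑ j ∈ Finset.range i, z ^ j * w ^ (i - 1 - j) := tsum_mul_left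
  · refine norm_tsum_le_of_forall_le_of_nonneg hC0 fun i => ?_
    refine (hgb i).trans ?_
    rw [div_le_iff₀ (pow_pos (by linarith : (0:ℝ) < rhat) i)]
    have h1 : (1:ℝ) ≤ rhat ^ i := by
      have := pow_le_pow_left₀ (by norm_num : (0:ℝ) ≤ 1) hrhat.le i
      simpa using this
    nlinarith


lemma aux19_binomA (p : ℕ) (hp : p.Prime) (hpnorm : ‖(p : K)‖ = (p : ℝ)⁻¹)
    (lam B δ : K) (hlam : ‖lam‖ = 1) {ρn ρm S R : ℝ} (hρn0 : 0 < ρn)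
    (hB : ‖B‖ ≤ ρn) (hδρ : ‖δ‖ ≤ ρn) (hδS : ‖δ‖ ≤ S)
    (hrec : (p : ℝ) * ρn ^ p = ρm) (hpρ : 1 ≤ (p : ℝ) * ρn)
    (hpS : (p : ℝ) * S ^ (p - 1) = R) (hRρ : R ≤ ρm) :
    ‖lam / (p : K) * ((B + δ) ^ p - B ^ p)‖ ≤ ρm * ‖δ‖ := by
  have hp0 : (0 : ℝ) < p := by exact_mod_cast hp.pos
  have hρm0 : 0 < ρm := by nlinarith [pow_pos hρn0 p]
  have hδn := norm_nonneg δ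
  have hρ_le : ρn ^ (p - 1) ≤ ρm := by
    have e : ρn ^ (p - 1) * ρn = ρn ^ p := pow_sub_one_mul hp.ne_zero ρn
    nlinarith [pow_nonneg hρn0.le (p - 1)]
  have hexp : (B + δ) ^ p - B ^ p
      = ∑ k ∈ Finset.range p, B ^ k * δ ^ (p - k) * (p.choose k : K) := by
    rw [add_pow, Finset.sum_range_succ, Nat.choose_self, Nat.sub_self, pow_zero, Nat.cast_one,
      mul_one, mul_one, add_sub_cancel_right]
  rw [hexp, Finset.mul_sum]
  refine IsUltrametricDist.norm_sum_le_of_forall_le_of_nonneg (mul_nonneg hρm0.le hδn) fun k hk => ?_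
  rw [Finset.mem_range] at hk
  have hnormdiv : ‖lam / (p : K)‖ = (p : ℝ) := by
    rw [norm_div, hlam, hpnorm, one_div, inv_inv]
  rw [norm_mul, norm_mul, norm_mul, hnormdiv, norm_pow, norm_pow]
  rcases Nat.eq_zero_or_pos k with rfl | hk0
  · -- k = 0 term
    simp only [pow_zero, one_mul, Nat.sub_zero, Nat.choose_zero_right, Nat.cast_one, norm_one,
      mul_one]
    have h1 : ‖δ‖ ^ p = ‖δ‖ ^ (p - 1) * ‖δ‖ := (pow_sub_one_mul hp.ne_zero ‖δ‖).symm
    rw [h1]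
    have h2 : ‖δ‖ ^ (p - 1) ≤ S ^ (p - 1) := pow_le_pow_left₀ hδn hδS _
    nlinarith [mul_le_mul_of_nonneg_right (mul_le_mul_of_nonneg_left h2 hp0.le) hδn]
  · -- 1 ≤ k < p
    obtain ⟨d, hd⟩ := hp.dvd_choose_self (by omega) hk
    have hchoose : ‖(p.choose k : K)‖ ≤ (p : ℝ)⁻¹ := by
      rw [hd]
      push_cast
      rw [norm_mul, hpnorm]
      have h6 := IsUltrametricDist.norm_natCast_le_one K d
      nlinarith [inv_pos.mpr hp0]
    have hδsplit : ‖δ‖ ^ (p - k) = ‖δ‖ ^ (p - 1 - k) * ‖δ‖ := by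
      rw [← pow_succ]
      congr 1
      omega
    have hBk : ‖B‖ ^ k ≤ ρn ^ k := pow_le_pow_left₀ (norm_nonneg _) hB _
    have hδk : ‖δ‖ ^ (p - 1 - k) ≤ ρn ^ (p - 1 - k) := pow_le_pow_left₀ hδn hδρ _
    have key : ρn ^ k * (ρn ^ (p - 1 - k) * ‖δ‖) = ρn ^ (p - 1) * ‖δ‖ := by
      rw [← mul_assoc, ← pow_add]
      congr 2
      omega
    have hstep : ‖B‖ ^ k * ‖δ‖ ^ (p - k) ≤ ρn ^ (p - 1) * ‖δ‖ := by
      rw [hδsplit]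
      calc ‖B‖ ^ k * (‖δ‖ ^ (p - 1 - k) * ‖δ‖)
          ≤ ρn ^ k * (ρn ^ (p - 1 - k) * ‖δ‖) :=
            mul_le_mul hBk (mul_le_mul_of_nonneg_right hδk hδn) (by positivity) (by positivity)
        _ = ρn ^ (p - 1) * ‖δ‖ := key
    have t1 : ‖B‖ ^ k * ‖δ‖ ^ (p - k) * ‖(p.choose k : K)‖
        ≤ (ρn ^ (p - 1) * ‖δ‖) * (p : ℝ)⁻¹ :=
      mul_le_mul hstep hchoose (norm_nonneg _) (by positivity)
    have t2 : (p:ℝ) * (‖B‖ ^ k * ‖δ‖ ^ (p - k) * ‖(p.choose k : K)‖)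
        ≤ (p:ℝ) * ((ρn ^ (p - 1) * ‖δ‖) * (p : ℝ)⁻¹) := mul_le_mul_of_nonneg_left t1 hp0.le
    have t3 : (p:ℝ) * ((ρn ^ (p - 1) * ‖δ‖) * (p : ℝ)⁻¹) = ρn ^ (p - 1) * ‖δ‖ := by
      field_simp
    have t4 : ρn ^ (p - 1) * ‖δ‖ ≤ ρm * ‖δ‖ := mul_le_mul_of_nonneg_right hρ_le hδn
    linarith

lemma aux19_binomB (p : ℕ) (hp : p.Prime) (c B δ : K) (hc : ‖c‖ = (p : ℝ))
    {ρn ρm : ℝ} (hρn0 : 0 < ρn) (hB : ‖B‖ ≤ ρn) (hδρ : ‖δ‖ ≤ ρn)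
    (hrec : (p : ℝ) * ρn ^ p = ρm) :
    ‖c * ((B + δ) ^ (p + 1) - B ^ (p + 1))‖ ≤ ρm * ‖δ‖ := by
  have hp0 : (0 : ℝ) < p := by exact_mod_cast hp.pos
  have hδn := norm_nonneg δ
  have hρm0 : 0 < ρm := by nlinarith [pow_pos hρn0 p]
  have hexp : (B + δ) ^ (p + 1) - B ^ (p + 1)
      = ∑ k ∈ Finset.range (p + 1), B ^ k * δ ^ (p + 1 - k) * ((p+1).choose k : K) := by
    rw [add_pow, Finset.sum_range_succ, Nat.choose_self, Nat.sub_self, pow_zero, Nat.cast_one,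
      mul_one, mul_one, add_sub_cancel_right]
  rw [hexp, Finset.mul_sum]
  refine IsUltrametricDist.norm_sum_le_of_forall_le_of_nonneg (mul_nonneg hρm0.le hδn) fun k hk => ?_
  rw [Finset.mem_range] at hk
  rw [norm_mul, norm_mul, norm_mul, hc, norm_pow, norm_pow]
  have hδsplit : ‖δ‖ ^ (p + 1 - k) = ‖δ‖ ^ (p - k) * ‖δ‖ := by
    rw [← pow_succ]
    congr 1
    omega
  have hBk : ‖B‖ ^ k ≤ ρn ^ k := pow_le_pow_left₀ (norm_nonneg _) hB _
  have hδk : ‖δ‖ ^ (p - k) ≤ ρn ^ (p - k) := pow_le_pow_left₀ hδn hδρ _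
  have key : ρn ^ k * (ρn ^ (p - k) * ‖δ‖) = ρn ^ p * ‖δ‖ := by
    rw [← mul_assoc, ← pow_add]
    congr 2
    omega
  have hstep : ‖B‖ ^ k * ‖δ‖ ^ (p + 1 - k) ≤ ρn ^ p * ‖δ‖ := by
    rw [hδsplit]
    calc ‖B‖ ^ k * (‖δ‖ ^ (p - k) * ‖δ‖)
        ≤ ρn ^ k * (ρn ^ (p - k) * ‖δ‖) :=
          mul_le_mul hBk (mul_le_mul_of_nonneg_right hδk hδn) (by positivity) (by positivity)
      _ = ρn ^ p * ‖δ‖ := key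
  have hch : ‖((p+1).choose k : K)‖ ≤ 1 := IsUltrametricDist.norm_natCast_le_one K _
  have t1 : ‖B‖ ^ k * ‖δ‖ ^ (p + 1 - k) * ‖((p+1).choose k : K)‖
      ≤ ρn ^ p * ‖δ‖ := by
    have h0 : (0:ℝ) ≤ ‖B‖ ^ k * ‖δ‖ ^ (p + 1 - k) := by positivity
    nlinarith [mul_le_mul_of_nonneg_right hch h0]
  have t2 : (p:ℝ) * (‖B‖ ^ k * ‖δ‖ ^ (p + 1 - k) * ‖((p+1).choose k : K)‖)
      ≤ (p:ℝ) * (ρn ^ p * ‖δ‖) := mul_le_mul_of_nonneg_left t1 hp0.le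
  have t3 : (p:ℝ) * (ρn ^ p * ‖δ‖) = ρm * ‖δ‖ := by rw [← hrec]; ring
  linarith

end Aux19

set_option maxHeartbeats 1000000 in
/-- If `|x₀| = |x₁| = ρ_m`, `|x₀ − x₁| ≤ S` and `λ₀, λ₁ ∈ Λ` satisfy
`ρ_{m−1}·…·ρ_1·|x₀ − x₁| < |λ₀ − λ₁| ≤ S`, then
`|Q_{λ₀}^m(x₀) − Q_{λ₁}^m(x₁)| = |λ₀ − λ₁|`.  Here `S > 0` satisfies
`p·S^{p−1} = p^{-1/(p-1)}`, and `ρ_0 = 1`, `p·ρ_n^p = ρ_{n−1}`.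
`K` plays the role of `ℂ_p`. -/
theorem statement19 (p : ℕ) (hp : p.Prime)
    {K : Type*} [NontriviallyNormedField K] [IsAlgClosed K] [CompleteSpace K]
    [IsUltrametricDist K] [CharZero K]
    (hpnorm : ‖(p : K)‖ = (p : ℝ)⁻¹)
    (S : ℝ) (hS : 0 < S) (hSdef : (p : ℝ) * S ^ (p - 1) = (p : ℝ) ^ (-(1:ℝ) / ((p : ℝ) - 1)))
    (ρseq : ℕ → ℝ) (hρ0 : ρseq 0 = 1) (hρpos : ∀ n, 0 < ρseq n)
    (hρrec : ∀ n : ℕ, (p : ℝ) * ρseq (n + 1) ^ p = ρseq n)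
    (rhat : ℝ) (hrhat : 1 < rhat) (hrhatval : ∃ x : K, x ≠ 0 ∧ ‖x‖ = rhat)
    (a : ℕ → K)
    (hQnorm : ∃ C : ℝ, C < (p : ℝ) ^ (-(1:ℝ) / ((p : ℝ) - 1)) ∧ ∀ i : ℕ, ‖a i‖ * rhat ^ i ≤ C)
    (h : K → K)
    (hfix : ∀ lam : K, ‖lam - 1‖ < 1 →
      ‖h lam - 1‖ ≤ ‖Qser a 1‖ / p ∧ Qstar p a lam (h lam) = h lam)
    (m : ℕ) (hm : 1 ≤ m) (x₀ x₁ : K)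
    (hx₀ : ‖x₀‖ = ρseq m) (hx₁ : ‖x₁‖ = ρseq m) (hx : ‖x₀ - x₁‖ ≤ S)
    (lam₀ lam₁ : K) (hlam₀ : ‖lam₀ - 1‖ < 1) (hlam₁ : ‖lam₁ - 1‖ < 1)
    (hlow : (∏ j ∈ Finset.Ico 1 m, ρseq j) * ‖x₀ - x₁‖ < ‖lam₀ - lam₁‖)
    (hup : ‖lam₀ - lam₁‖ ≤ S) :
    ‖(Qconj p a h lam₀)^[m] x₀ - (Qconj p a h lam₁)^[m] x₁‖ = ‖lam₀ - lam₁‖ := by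
  obtain ⟨C, hCR, hCa⟩ := hQnorm
  have hp2 : 2 ≤ p := hp.two_le
  have hq2 : (2:ℝ) ≤ (p:ℝ) := by exact_mod_cast hp2
  have hq1 : (1:ℝ) < (p:ℝ) := by linarith
  have hq0 : (0:ℝ) < (p:ℝ) := by linarith
  set R : ℝ := (p : ℝ) ^ (-(1:ℝ) / ((p : ℝ) - 1)) with hRdef
  have hR0 : 0 < R := Real.rpow_pos_of_pos hq0 _
  have hR1 : R < 1 := by
    apply Real.rpow_lt_one_of_one_lt_of_neg hq1
    exact div_neg_of_neg_of_pos (by norm_num) (by linarith)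
  have hRpow : R ^ (p - 1) = (p:ℝ)⁻¹ := by
    rw [hRdef, ← Real.rpow_natCast ((p:ℝ) ^ (-(1:ℝ)/((p:ℝ)-1))) (p-1), ← Real.rpow_mul hq0.le]
    rw [Nat.cast_sub hp.one_le, Nat.cast_one]
    have e : (-(1:ℝ)/((p:ℝ)-1)) * ((p:ℝ) - 1) = -1 := by
      have hne : (p:ℝ) - 1 ≠ 0 := by linarith
      field_simp
    rw [e, Real.rpow_neg_one]
  have hRp : (p:ℝ) * R ^ p = R := by
    have e : R ^ (p-1) * R = R ^ p := pow_sub_one_mul hp.ne_zero R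
    rw [← e, hRpow]
    field_simp
  have hRq : (p:ℝ)⁻¹ ≤ R := by
    rw [hRdef, ← Real.rpow_neg_one (p:ℝ)]
    apply (Real.rpow_le_rpow_left_iff hq1).mpr
    have h1 : (0:ℝ) < (p:ℝ) - 1 := by linarith
    have h2 : (1:ℝ)/((p:ℝ)-1) ≤ 1 := by
      rw [div_le_one h1]
      linarith
    have e : -(1:ℝ)/((p:ℝ)-1) = -(1/((p:ℝ)-1)) := by ring
    rw [e]
    linarith
  have hρ_gtR : ∀ n, R < ρseq n := by
    intro n
    induction n with
    | zero => rw [hρ0]; exact hR1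
    | succ n ih =>
      by_contra hcon
      push_neg at hcon
      have h1 : ρseq (n+1) ^ p ≤ R ^ p := pow_le_pow_left₀ (hρpos _).le hcon p
      have h2 := mul_le_mul_of_nonneg_left h1 hq0.le
      linarith [hρrec n, hRp]
  have hρ_le1 : ∀ n, ρseq n ≤ 1 := by
    intro n
    induction n with
    | zero => rw [hρ0]
    | succ n ih =>
      by_contra hcon
      push_neg at hcon
      have h1 : (1:ℝ) ≤ ρseq (n+1) ^ p := one_le_pow₀ hcon.le
      have h2 := mul_le_mul_of_nonneg_left h1 hq0.le
      rw [mul_one] at h2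
      linarith [hρrec n]
  have hρ_lt1 : ∀ n, ρseq (n+1) < 1 := by
    intro n
    by_contra hcon
    push_neg at hcon
    have h1 : (1:ℝ) ≤ ρseq (n+1) ^ p := one_le_pow₀ hcon
    have h2 := mul_le_mul_of_nonneg_left h1 hq0.le
    rw [mul_one] at h2
    linarith [hρrec n, hρ_le1 n]
  have hpρ1 : ∀ n, 1 ≤ (p:ℝ) * ρseq n := by
    intro n
    have h3 : (p:ℝ) * (p:ℝ)⁻¹ ≤ (p:ℝ) * ρseq n :=
      mul_le_mul_of_nonneg_left (hRq.trans (hρ_gtR n).le) hq0.le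
    have h2 : (p:ℝ) * (p:ℝ)⁻¹ = 1 := mul_inv_cancel₀ hq0.ne'
    linarith
  have hS_lt_R : S < R := by
    by_contra hcon
    push_neg at hcon
    have h1 : R ^ (p-1) ≤ S ^ (p-1) := pow_le_pow_left₀ hR0.le hcon _
    rw [hRpow] at h1
    have h2 : (p:ℝ) * (p:ℝ)⁻¹ = 1 := mul_inv_cancel₀ hq0.ne'
    have h3 := mul_le_mul_of_nonneg_left h1 hq0.le
    linarith [hSdef]
  have hC0 : 0 ≤ C := le_trans (by positivity) (hCa 0)
  have hC1 : C < 1 := lt_trans hCR hR1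
  have hCp_le : C / p ≤ C := by
    rw [div_le_iff₀ hq0]
    have h1 : C * 1 ≤ C * p := mul_le_mul_of_nonneg_left (by linarith) hC0
    linarith
  have hCp1 : C / p < 1 := lt_of_le_of_lt hCp_le hC1
  have hCp0 : (0:ℝ) ≤ C / p := by positivity
  have hlamn₀ : ‖lam₀‖ = 1 := aux19_norm_eq_one hlam₀
  have hlamn₁ : ‖lam₁‖ = 1 := aux19_norm_eq_one hlam₁
  set L := ‖lam₀ - lam₁‖ with hLdef
  have hL0 : 0 < L := lt_of_le_of_lt
    (mul_nonneg (Finset.prod_nonneg fun i _ => (hρpos i).le) (norm_nonneg _)) hlow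
  have hLS : L ≤ S := hup
  have hLCS : L * C ≤ S := (mul_le_of_le_one_right hL0.le hC1.le).trans hLS
  have hdiv : ∀ lam : K, ‖lam‖ = 1 → ‖lam / (p:K)‖ = (p:ℝ) := fun lam hl => by
    rw [norm_div, hl, hpnorm, one_div, inv_inv]
  have hlp : ∀ lam : K, ‖lam‖ = 1 → ‖1 - lam/(p:K)‖ = (p:ℝ) := by
    intro lam hl
    rw [aux19_nsub' (by rw [norm_one, hdiv lam hl]; exact hq1), hdiv lam hl]
  have hQ1 : ‖Qser a 1‖ ≤ C := aux19_Qser_norm_le hrhat hC0 hCa (by simp)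
  have hg₀ : ‖h lam₀ - 1‖ ≤ C / p := le_trans (hfix lam₀ hlam₀).1 (by gcongr)
  have hg₁ : ‖h lam₁ - 1‖ ≤ C / p := le_trans (hfix lam₁ hlam₁).1 (by gcongr)
  have hgn₀ : ‖h lam₀‖ = 1 := aux19_norm_eq_one (lt_of_le_of_lt hg₀ hCp1)
  have hgn₁ : ‖h lam₁‖ = 1 := aux19_norm_eq_one (lt_of_le_of_lt hg₁ hCp1)
  -- the difference of the fixed points
  have hgdiff : ‖h lam₀ - h lam₁‖ ≤ L * C := by
    obtain ⟨W, hWeq, hWle⟩ := aux19_Qser_sub hrhat hC0 hCa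
      (z := h lam₀) (w := h lam₁) (by rw [hgn₀]) (by rw [hgn₁])
    set g₀ := h lam₀ with hg₀def
    set g₁ := h lam₁ with hg₁def
    set Sp : K := ∑ i ∈ Finset.range p, g₀ ^ i * g₁ ^ (p - 1 - i) with hSpdef
    set Sp1 : K := ∑ i ∈ Finset.range (p+1), g₀ ^ i * g₁ ^ (p + 1 - 1 - i) with hSp1def
    have hgp : g₀ ^ p - g₁ ^ p = (g₀ - g₁) * Sp := by
      rw [← geom_sum₂_mul g₀ g₁ p, hSpdef]
      ring
    have hgp1 : g₀ ^ (p+1) - g₁ ^ (p+1) = (g₀ - g₁) * Sp1 := by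
      rw [← geom_sum₂_mul g₀ g₁ (p+1), hSp1def]
      ring
    have e0 := (hfix lam₀ hlam₀).2
    have e1 := (hfix lam₁ hlam₁).2
    simp only [Qstar, Pfam, ← hg₀def, ← hg₁def] at e0 e1
    have key : (g₀ - g₁) * (1 - (lam₀/(p:K) * Sp + (1 - lam₀/(p:K)) * Sp1 + W))
        = (lam₀ - lam₁)/(p:K) * (g₁^p * (1 - g₁)) := by
      linear_combination -e0 + e1 + (lam₀/(p:K)) * hgp + (1 - lam₀/(p:K)) * hgp1 + hWeq
    have hSp_near : ‖Sp - (p:K)‖ ≤ C / p := by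
      have e : Sp - (p:K) = ∑ i ∈ Finset.range p, (g₀ ^ i * g₁ ^ (p - 1 - i) - 1) := by
        rw [hSpdef, Finset.sum_sub_distrib]
        simp
      rw [e]
      exact IsUltrametricDist.norm_sum_le_of_forall_le_of_nonneg hCp0
        (fun i _ => aux19_prodpow_near_one hCp1.le hg₀ hg₁ _ _)
    have hSp1_near : ‖Sp1 - ((p+1 : ℕ):K)‖ ≤ C / p := by
      have e : Sp1 - ((p+1:ℕ):K) = ∑ i ∈ Finset.range (p+1), (g₀ ^ i * g₁ ^ (p + 1 - 1 - i) - 1) := by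
        rw [hSp1def, Finset.sum_sub_distrib]
        simp
      rw [e]
      exact IsUltrametricDist.norm_sum_le_of_forall_le_of_nonneg hCp0
        (fun i _ => aux19_prodpow_near_one hCp1.le hg₀ hg₁ _ _)
    have hp1K : ‖((p+1:ℕ):K)‖ = 1 := by
      push_cast
      rw [add_comm, aux19_nadd (by rw [hpnorm, norm_one]; exact inv_lt_one_of_one_lt₀ hq1), norm_one]
    have hSp1n : ‖Sp1‖ = 1 := by
      have e : Sp1 = ((p+1:ℕ):K) + (Sp1 - ((p+1:ℕ):K)) := by ring
      rw [e, aux19_nadd (by rw [hp1K]; exact lt_of_le_of_lt hSp1_near hCp1)]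
      exact hp1K
    have hSp_le : ‖Sp‖ ≤ (p:ℝ)⁻¹ := by
      have e : Sp = (p:K) + (Sp - (p:K)) := by ring
      rw [e]
      refine (IsUltrametricDist.norm_add_le_max _ _).trans (max_le (le_of_eq hpnorm) ?_)
      refine hSp_near.trans ?_
      rw [div_eq_mul_inv]
      exact mul_le_of_le_one_left (inv_nonneg.mpr hq0.le) hC1.le
    have hX : ‖1 - lam₀/(p:K) * Sp - W‖ ≤ 1 := by
      have h1 : ‖lam₀/(p:K) * Sp‖ ≤ 1 := by
        rw [norm_mul, hdiv lam₀ hlamn₀]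
        calc (p:ℝ) * ‖Sp‖ ≤ (p:ℝ) * (p:ℝ)⁻¹ := mul_le_mul_of_nonneg_left hSp_le hq0.le
          _ = 1 := mul_inv_cancel₀ hq0.ne'
      refine (aux19_nsub_le _ _).trans (max_le ?_ (by linarith [hWle]))
      refine (aux19_nsub_le _ _).trans (max_le (by simp) h1)
    have hY : ‖(1 - lam₀/(p:K)) * Sp1‖ = (p:ℝ) := by
      rw [norm_mul, hSp1n, mul_one, hlp lam₀ hlamn₀]
    have h1G : ‖1 - (lam₀/(p:K) * Sp + (1 - lam₀/(p:K)) * Sp1 + W)‖ = (p:ℝ) := by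
      have e : 1 - (lam₀/(p:K) * Sp + (1 - lam₀/(p:K)) * Sp1 + W)
          = (1 - lam₀/(p:K) * Sp - W) - (1 - lam₀/(p:K)) * Sp1 := by ring
      rw [e, aux19_nsub' (by rw [hY]; exact lt_of_le_of_lt hX hq1), hY]
    have hT : ‖(lam₀ - lam₁)/(p:K) * (g₁^p * (1 - g₁))‖ ≤ L * C := by
      have hg₁' : ‖(1:K) - g₁‖ ≤ C / p := by
        rw [norm_sub_rev]
        exact hg₁
      rw [norm_mul, norm_div, hpnorm, norm_mul, norm_pow, hgn₁, one_pow, one_mul,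
        div_eq_mul_inv, inv_inv]
      calc ‖lam₀ - lam₁‖ * (p:ℝ) * ‖1 - g₁‖ ≤ ‖lam₀ - lam₁‖ * (p:ℝ) * (C / p) :=
            mul_le_mul_of_nonneg_left hg₁' (mul_nonneg (norm_nonneg _) hq0.le)
        _ = ‖lam₀ - lam₁‖ * C := by
            field_simp
        _ = L * C := by rw [hLdef]
    have hnorms := congrArg norm key
    rw [norm_mul, h1G] at hnorms
    have h8 : ‖g₀ - g₁‖ * (p:ℝ) ≤ L * C := hnorms.le.trans hT
    have h9 : ‖g₀ - g₁‖ * 1 ≤ ‖g₀ - g₁‖ * (p:ℝ) :=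
      mul_le_mul_of_nonneg_left (by linarith) (norm_nonneg _)
    linarith
  -- norm of one application
  have normF : ∀ lam : K, ‖lam‖ = 1 → ‖h lam - 1‖ ≤ C/p → ∀ n : ℕ, ∀ w : K,
      ‖w‖ = ρseq (n+1) → ‖Qconj p a h lam w‖ = ρseq n := by
    intro lam hl hgl n w hw
    have hCρ1 : C / p < ρseq (n+1) := by
      calc C / p ≤ C := hCp_le
        _ < R := hCR
        _ < ρseq (n+1) := hρ_gtR _
    have hAw : ‖w + (h lam - 1)‖ = ρseq (n+1) := by
      rw [aux19_nadd (by rw [hw]; exact lt_of_le_of_lt hgl hCρ1)]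
      exact hw
    have hQc : Qconj p a h lam w = lam/(p:K) * (w + (h lam - 1))^p
        + ((1 - lam/(p:K)) * (w + (h lam - 1))^(p+1)
          + (Qser a (w + (h lam - 1)) + (1 - h lam))) := by
      have e : w + h lam - 1 = w + (h lam - 1) := by ring
      simp only [Qconj, Qstar, Pfam, e]
      ring
    rw [hQc]
    have h1 : ‖lam/(p:K) * (w + (h lam - 1))^p‖ = ρseq n := by
      rw [norm_mul, hdiv lam hl, norm_pow, hAw]
      exact hρrec n
    have h2 : ‖(1 - lam/(p:K)) * (w + (h lam - 1))^(p+1)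
        + (Qser a (w + (h lam - 1)) + (1 - h lam))‖ < ρseq n := by
      have hb1 : ‖(1 - lam/(p:K)) * (w + (h lam - 1))^(p+1)‖ < ρseq n := by
        rw [norm_mul, norm_pow, hAw, hlp lam hl, pow_succ]
        have e1 : (p:ℝ) * (ρseq (n+1) ^ p * ρseq (n+1)) = ρseq n * ρseq (n+1) := by
          rw [← hρrec n]
          ring
        rw [e1]
        exact mul_lt_of_lt_one_right (hρpos n) (hρ_lt1 n)
      have hb2 : ‖Qser a (w + (h lam - 1))‖ ≤ C :=
        aux19_Qser_norm_le hrhat hC0 hCa (by rw [hAw]; exact hρ_le1 _)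
      have hCρ : C < ρseq n := hCR.trans (hρ_gtR n)
      refine lt_of_le_of_lt (IsUltrametricDist.norm_add_le_max _ _) (max_lt hb1 ?_)
      refine lt_of_le_of_lt (IsUltrametricDist.norm_add_le_max _ _) (max_lt (lt_of_le_of_lt hb2 hCρ) ?_)
      rw [norm_sub_rev]
      exact lt_of_le_of_lt hgl (lt_of_le_of_lt hCp_le hCρ)
    rw [aux19_nadd (by rw [h1]; exact h2)]
    exact h1
  -- the contraction/difference step
  have step : ∀ n : ℕ, ∀ u v : K, ‖u‖ = ρseq (n+1) → ‖v‖ = ρseq (n+1) → ‖u - v‖ ≤ S →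
      ‖Qconj p a h lam₀ u - Qconj p a h lam₁ v‖ ≤ max (L * ρseq n) (ρseq n * ‖u - v‖) ∧
      (‖u - v‖ < L → ‖Qconj p a h lam₀ u - Qconj p a h lam₁ v‖ = L * ρseq n) := by
    intro n u v hu hv huv
    have hρn0 : 0 < ρseq n := hρpos n
    have hρn1 : 0 < ρseq (n+1) := hρpos (n+1)
    have hCρ : C < ρseq n := hCR.trans (hρ_gtR n)
    set A := u + (h lam₀ - 1) with hA
    set B := v + (h lam₁ - 1) with hB
    have hCρ1 : C / p < ρseq (n+1) := by
      calc C / p ≤ C := hCp_le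
        _ < R := hCR
        _ < ρseq (n+1) := hρ_gtR _
    have hAn : ‖A‖ = ρseq (n+1) := by
      rw [hA, aux19_nadd (by rw [hu]; exact lt_of_le_of_lt hg₀ hCρ1)]
      exact hu
    have hBn : ‖B‖ = ρseq (n+1) := by
      rw [hB, aux19_nadd (by rw [hv]; exact lt_of_le_of_lt hg₁ hCρ1)]
      exact hv
    have hdiffAB : ‖A - B‖ ≤ max ‖u - v‖ (L*C) := by
      have e : A - B = (u - v) + (h lam₀ - h lam₁) := by rw [hA, hB]; ring
      rw [e]
      exact (IsUltrametricDist.norm_add_le_max _ _).trans (max_le_max le_rfl hgdiff)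
    have hABS : ‖A - B‖ ≤ S := hdiffAB.trans (max_le huv hLCS)
    have hABρ : ‖A - B‖ ≤ ρseq (n+1) := hABS.trans (by linarith [hS_lt_R, hρ_gtR (n+1)])
    have hdecomp : Qconj p a h lam₀ u - Qconj p a h lam₁ v
        = (lam₀ - lam₁)/(p:K) * (B^p * (1 - B))
          + (lam₀/(p:K) * (A^p - B^p)
          + ((1 - lam₀/(p:K)) * (A^(p+1) - B^(p+1))
          + ((Qser a A - Qser a B) - (h lam₀ - h lam₁)))) := by
      simp only [Qconj, Qstar, Pfam, hA, hB]
      ring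
    have hBlt1 : ‖B‖ < 1 := by rw [hBn]; exact hρ_lt1 n
    have hT : ‖(lam₀ - lam₁)/(p:K) * (B^p * (1 - B))‖ = L * ρseq n := by
      have h1B : ‖(1:K) - B‖ = 1 := by
        rw [aux19_nsub (by rw [norm_one]; exact hBlt1), norm_one]
      rw [norm_mul, norm_div, hpnorm, norm_mul, norm_pow, hBn, h1B, mul_one,
        div_eq_mul_inv, inv_inv, mul_assoc, hρrec n, hLdef]
    have hTr1 : ‖lam₀/(p:K) * (A^p - B^p)‖ ≤ ρseq n * ‖A - B‖ := by
      have hABe : A = B + (A - B) := by ring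
      have hres := aux19_binomA p hp hpnorm lam₀ B (A - B) hlamn₀ hρn1 hBn.le hABρ hABS
        (hρrec n) (hpρ1 (n+1)) hSdef (hρ_gtR n).le
      rwa [← hABe] at hres
    have hTr2 : ‖(1 - lam₀/(p:K)) * (A^(p+1) - B^(p+1))‖ ≤ ρseq n * ‖A - B‖ := by
      have hABe : A = B + (A - B) := by ring
      have hres := aux19_binomB p hp (1 - lam₀/(p:K)) B (A - B) (hlp lam₀ hlamn₀) hρn1 hBn.le
        hABρ (hρrec n)
      rwa [← hABe] at hres
    have hQT : ‖Qser a A - Qser a B‖ ≤ ρseq n * ‖A - B‖ := by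
      obtain ⟨W, hWeq, hWle⟩ := aux19_Qser_sub hrhat hC0 hCa
        (z := A) (w := B) (by rw [hAn]; exact hρ_le1 _) (by rw [hBn]; exact hρ_le1 _)
      rw [hWeq, norm_mul]
      calc ‖A - B‖ * ‖W‖ ≤ ‖A - B‖ * ρseq n :=
            mul_le_mul_of_nonneg_left (hWle.trans hCρ.le) (norm_nonneg _)
        _ = ρseq n * ‖A - B‖ := mul_comm _ _
    have hRest : ‖lam₀/(p:K) * (A^p - B^p)
        + ((1 - lam₀/(p:K)) * (A^(p+1) - B^(p+1))
        + ((Qser a A - Qser a B) - (h lam₀ - h lam₁)))‖ ≤ max (ρseq n * ‖A - B‖) (L * C) := by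
      refine (IsUltrametricDist.norm_add_le_max _ _).trans
        (max_le (hTr1.trans (le_max_left _ _)) ?_)
      refine (IsUltrametricDist.norm_add_le_max _ _).trans
        (max_le (hTr2.trans (le_max_left _ _)) ?_)
      exact (aux19_nsub_le _ _).trans
        (max_le (hQT.trans (le_max_left _ _)) (hgdiff.trans (le_max_right _ _)))
    have hRest2 : ‖lam₀/(p:K) * (A^p - B^p)
        + ((1 - lam₀/(p:K)) * (A^(p+1) - B^(p+1))
        + ((Qser a A - Qser a B) - (h lam₀ - h lam₁)))‖
          ≤ max (max (ρseq n * ‖u - v‖) (L * C)) (L * C) := by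
      refine hRest.trans (max_le_max ?_ le_rfl)
      rcases le_total ‖u - v‖ (L*C) with hcase | hcase
      · have h3 : ‖A - B‖ ≤ L * C := hdiffAB.trans (max_le hcase le_rfl)
        refine le_trans ?_ (le_max_right _ _)
        calc ρseq n * ‖A - B‖ ≤ 1 * (L * C) :=
              mul_le_mul (hρ_le1 n) h3 (norm_nonneg _) zero_le_one
          _ = L * C := one_mul _
      · have h3 : ‖A - B‖ ≤ ‖u - v‖ := hdiffAB.trans (max_le le_rfl hcase)
        exact le_trans (mul_le_mul_of_nonneg_left h3 hρn0.le) (le_max_left _ _)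
    have hLC_lt : L * C < L * ρseq n := mul_lt_mul_of_pos_left hCρ hL0
    constructor
    · rw [hdecomp]
      refine (IsUltrametricDist.norm_add_le_max _ _).trans ?_
      rw [hT]
      refine max_le (le_max_left _ _) (hRest2.trans ?_)
      refine max_le (max_le (le_max_right _ _) ?_) ?_ <;>
        exact le_trans hLC_lt.le (le_max_left _ _)
    · intro hlt
      rw [hdecomp]
      have hR1' : ‖lam₀/(p:K) * (A^p - B^p)
          + ((1 - lam₀/(p:K)) * (A^(p+1) - B^(p+1))
          + ((Qser a A - Qser a B) - (h lam₀ - h lam₁)))‖ < L * ρseq n := by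
        refine hRest.trans_lt (max_lt ?_ hLC_lt)
        have h3 : ‖A - B‖ < L := hdiffAB.trans_lt
          (max_lt hlt (mul_lt_of_lt_one_right hL0 hC1))
        calc ρseq n * ‖A - B‖ < ρseq n * L := mul_lt_mul_of_pos_left h3 hρn0
          _ = L * ρseq n := mul_comm _ _
      rw [aux19_nadd (by rw [hT]; exact hR1')]
      exact hT
  -- the main induction
  have main : ∀ k, k ≤ m →
      ‖(Qconj p a h lam₀)^[k] x₀‖ = ρseq (m - k) ∧
      ‖(Qconj p a h lam₁)^[k] x₁‖ = ρseq (m - k) ∧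
      ‖(Qconj p a h lam₀)^[k] x₀ - (Qconj p a h lam₁)^[k] x₁‖
        ≤ max ((∏ j ∈ Finset.Ico (m - k) m, ρseq j) * ‖x₀ - x₁‖) (L * ρseq (m - k)) := by
    intro k
    induction k with
    | zero =>
      intro _
      refine ⟨by simpa using hx₀, by simpa using hx₁, ?_⟩
      simp only [Function.iterate_zero_apply, Nat.sub_zero, Finset.Ico_self,
        Finset.prod_empty, one_mul]
      exact le_max_left _ _
    | succ k ih =>
      intro hk1
      obtain ⟨hy, hz, hd⟩ := ih (by omega)
      have hmk : m - k = (m - (k+1)) + 1 := by omega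
      rw [hmk] at hy hz hd
      have hprod_le1 : (∏ j ∈ Finset.Ico (m - (k+1) + 1) m, ρseq j) ≤ 1 :=
        Finset.prod_le_one (fun i _ => (hρpos i).le) (fun i _ => hρ_le1 i)
      have hprod_nn : (0:ℝ) ≤ ∏ j ∈ Finset.Ico (m - (k+1) + 1) m, ρseq j :=
        Finset.prod_nonneg (fun i _ => (hρpos i).le)
      have hdS : ‖(Qconj p a h lam₀)^[k] x₀ - (Qconj p a h lam₁)^[k] x₁‖ ≤ S := by
        refine hd.trans (max_le ?_ ?_)
        · calc (∏ j ∈ Finset.Ico (m - (k+1) + 1) m, ρseq j) * ‖x₀ - x₁‖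
              ≤ 1 * ‖x₀ - x₁‖ := mul_le_mul_of_nonneg_right hprod_le1 (norm_nonneg _)
            _ = ‖x₀ - x₁‖ := one_mul _
            _ ≤ S := hx
        · exact (mul_le_of_le_one_right hL0.le (hρ_le1 _)).trans hLS
      obtain ⟨hb, _⟩ := step (m - (k+1)) _ _ hy hz hdS
      rw [Function.iterate_succ_apply', Function.iterate_succ_apply']
      refine ⟨normF lam₀ hlamn₀ hg₀ _ _ hy, normF lam₁ hlamn₁ hg₁ _ _ hz, ?_⟩
      refine hb.trans (max_le (le_max_right _ _) ?_)
      have hsplit : (∏ j ∈ Finset.Ico (m - (k+1)) m, ρseq j)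
          = ρseq (m - (k+1)) * ∏ j ∈ Finset.Ico (m - (k+1) + 1) m, ρseq j := by
        rw [Finset.prod_eq_prod_Ico_succ_bot (by omega : m - (k+1) < m)]
      refine le_trans (mul_le_mul_of_nonneg_left hd (hρpos (m - (k+1))).le) ?_
      rw [mul_max_of_nonneg _ _ (hρpos (m - (k+1))).le]
      refine max_le ?_ ?_
      · refine le_trans (le_of_eq ?_) (le_max_left _ _)
        rw [hsplit]
        ring
      · refine le_trans ?_ (le_max_right _ _)
        calc ρseq (m - (k+1)) * (L * ρseq (m - (k+1) + 1))
            = L * ρseq (m - (k+1)) * ρseq (m - (k+1) + 1) := by ring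
          _ ≤ L * ρseq (m - (k+1)) :=
              mul_le_of_le_one_right (mul_nonneg hL0.le (hρpos _).le) (hρ_le1 _)
  -- conclusion
  obtain ⟨M, rfl⟩ : ∃ M, m = M + 1 := ⟨m - 1, by omega⟩
  obtain ⟨hyM, hzM, hdM⟩ := main M (by omega)
  have hsub : M + 1 - M = 1 := by omega
  rw [hsub] at hyM hzM hdM
  have hdMS : ‖(Qconj p a h lam₀)^[M] x₀ - (Qconj p a h lam₁)^[M] x₁‖ ≤ S := by
    refine hdM.trans (max_le ?_ ?_)
    · have hprod_le1 : (∏ j ∈ Finset.Ico 1 (M+1), ρseq j) ≤ 1 :=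
        Finset.prod_le_one (fun i _ => (hρpos i).le) (fun i _ => hρ_le1 i)
      have hprod_nn : (0:ℝ) ≤ ∏ j ∈ Finset.Ico 1 (M+1), ρseq j :=
        Finset.prod_nonneg (fun i _ => (hρpos i).le)
      calc (∏ j ∈ Finset.Ico 1 (M+1), ρseq j) * ‖x₀ - x₁‖
          ≤ 1 * ‖x₀ - x₁‖ := mul_le_mul_of_nonneg_right hprod_le1 (norm_nonneg _)
        _ = ‖x₀ - x₁‖ := one_mul _
        _ ≤ S := hx
    · exact (mul_le_of_le_one_right hL0.le (hρ_le1 _)).trans hLS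
  have hdML : ‖(Qconj p a h lam₀)^[M] x₀ - (Qconj p a h lam₁)^[M] x₁‖ < L := by
    refine hdM.trans_lt (max_lt hlow ?_)
    exact mul_lt_of_lt_one_right hL0 (hρ_lt1 0)
  have hfin := (step 0 _ _ hyM hzM hdMS).2 hdML
  rw [Function.iterate_succ_apply', Function.iterate_succ_apply']
  rw [hfin, hρ0, mul_one]
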